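/- arXiv:2401.15831 — 3 statements merged into one kernel-verified Lean document; each statement's English description precedes it below -/
import Mathlib

section
/- Let N ≥ 2, let μ₁,…,μ_N > 0 be constants, let P₁,…,P_N ∈ ℕ, and suppose the real constants β_{ij} = β_{ji} (for i ≠ j) satisfy β_{ij} ≥ 0. If u₁,…,u_N : ℝ³ → ℝ are radial functions of class C² such that for every j one has |u_j(x)| ≤ 1 for all x ∈ ℝ³, u_j is either identically zero or changes sign at most P_j times, and −Δu_j = μ_j u_j³ + Σ_{i≠j} β_{ij} u_i² u_j holds pointwise in ℝ³, then u_j ≡ 0 for every j = 1,…,N. -/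
open scoped BigOperators

/-- The Laplacian on `ℝ³`, written as the sum of second partial derivatives. -/
noncomputable def lap3 (u : EuclideanSpace ℝ (Fin 3) → ℝ) (x : EuclideanSpace ℝ (Fin 3)) : ℝ :=
  ∑ i : Fin 3, fderiv ℝ (fun y => fderiv ℝ u y (EuclideanSpace.single i 1)) x
    (EuclideanSpace.single i 1)

/-- A function on `ℝ³` is radial if it only depends on the norm. -/
def IsRadial (u : EuclideanSpace ℝ (Fin 3) → ℝ) : Prop :=
  ∃ v : ℝ → ℝ, ∀ x, u x = v ‖x‖

/-- There are `k + 1` points of `S`, with positive and strictly increasing norms, on which `u`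
successively changes sign `k` times. -/
def SignChangeWitnessOn (u : EuclideanSpace ℝ (Fin 3) → ℝ) (S : Set (EuclideanSpace ℝ (Fin 3))) (k : ℕ) : Prop :=
  ∃ x : Fin (k + 1) → EuclideanSpace ℝ (Fin 3),
    (∀ i, x i ∈ S) ∧ (∀ i, 0 < ‖x i‖) ∧
    (∀ i j : Fin (k + 1), i < j → ‖x i‖ < ‖x j‖) ∧
    (∀ i : Fin k, u (x i.castSucc) * u (x i.succ) < 0)

/-- A radial function changes sign at most `P` times on `S`. -/
def ChangesSignAtMostOn (u : EuclideanSpace ℝ (Fin 3) → ℝ) (S : Set (EuclideanSpace ℝ (Fin 3))) (P : ℕ) : Prop :=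
  ¬ SignChangeWitnessOn u S (P + 1)

/-- A radial function changes sign exactly `P` times on `S`. -/
def ChangesSignExactlyOn (u : EuclideanSpace ℝ (Fin 3) → ℝ) (S : Set (EuclideanSpace ℝ (Fin 3))) (P : ℕ) : Prop :=
  SignChangeWitnessOn u S P ∧ ¬ SignChangeWitnessOn u S (P + 1)

/-!
Fix `j` with `u_j ≢ 0` and write `u_j x = v ‖x‖`. The system gives `v'' + 2 v' / r = -c v`
with `c = μ_j v² + ∑ β_ij v_i² ≥ μ_j v²`, so `w = r v` solves the linear equation `w'' = -c w`.
Finitely many sign changes make `v` of one sign for large `r`, say `v ≥ 0`. Then `w ≥ 0` is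
concave near infinity, hence nondecreasing, and `w'' ≤ -μ w³ / r²`. If `w (r₁) > 0`, integrating
this over `[r, 2r]` gives `w' ≥ μ w³ / (2r)`, so `w⁻² + μ log r` is nonincreasing for `r ≥ r₁`,
which is absurd since `log r → ∞`. Hence `w` vanishes near infinity, and by uniqueness for
`w'' = -c w` it vanishes on `(0, ∞)`; continuity gives `v 0 = 0`.
-/

open Set Filter Topology

noncomputable def radialProfile (u : EuclideanSpace ℝ (Fin 3) → ℝ) (t : ℝ) : ℝ :=
  u (t • EuclideanSpace.single 0 1)

theorem norm_smul_single_zero {t : ℝ} (ht : 0 ≤ t) :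
    ‖t • EuclideanSpace.single (0 : Fin 3) (1 : ℝ)‖ = t := by
  rw [norm_smul, PiLp.norm_single, norm_one, mul_one, Real.norm_of_nonneg ht]

theorem IsRadial.eq_radialProfile_norm {u : EuclideanSpace ℝ (Fin 3) → ℝ} (hu : IsRadial u)
    (x : EuclideanSpace ℝ (Fin 3)) : u x = radialProfile u ‖x‖ := by
  obtain ⟨V, hV⟩ := hu
  rw [radialProfile, hV, hV, norm_smul_single_zero (norm_nonneg x)]

theorem ContDiff.radialProfile {n : WithTop ℕ∞} {u : EuclideanSpace ℝ (Fin 3) → ℝ}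
    (hu : ContDiff ℝ n u) : ContDiff ℝ n (radialProfile u) :=
  hu.comp (contDiff_id.smul contDiff_const)

theorem signChangeWitnessOn_univ_of_frequently {u : EuclideanSpace ℝ (Fin 3) → ℝ} {v : ℝ → ℝ}
    (huv : ∀ x, u x = v ‖x‖) (hneg : ∃ᶠ r in atTop, v r < 0) (hpos : ∃ᶠ r in atTop, 0 < v r)
    (k : ℕ) : SignChangeWitnessOn u univ k := by
  choose neg hneg_gt hneg_lt using frequently_atTop'.1 hneg
  choose pos hpos_gt hpos_lt using frequently_atTop'.1 hpos
  set next : ℝ → ℝ := fun a => if 0 < v a then neg (max a 0) else pos (max a 0) with hnext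
  have next_gt (a : ℝ) : max a 0 < next a := by
    simp only [hnext]; split_ifs
    exacts [hneg_gt _, hpos_gt _]
  have next_ne (a : ℝ) : v (next a) ≠ 0 := by
    simp only [hnext]; split_ifs
    exacts [(hneg_lt _).ne, (hpos_lt _).ne']
  have next_mul {a : ℝ} (ha : v a ≠ 0) : v a * v (next a) < 0 := by
    simp only [hnext]; split_ifs with h
    · exact mul_neg_of_pos_of_neg h (hneg_lt _)
    · exact mul_neg_of_neg_of_pos (lt_of_le_of_ne (not_lt.1 h) ha) (hpos_lt _)
  set r : ℕ → ℝ := fun n => next^[n + 1] 0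
  have hr (n : ℕ) : r n = next (next^[n] 0) := Function.iterate_succ_apply' next n 0
  have hr_succ (n : ℕ) : r (n + 1) = next (r n) := hr (n + 1)
  have hr_pos (n : ℕ) : 0 < r n := by
    rw [hr]; exact (le_max_right _ _).trans_lt (next_gt _)
  have hr_mono : StrictMono r := strictMono_nat_of_lt_succ fun n => by
    rw [hr_succ]; exact (le_max_left _ _).trans_lt (next_gt _)
  have hnorm (n : ℕ) : ‖EuclideanSpace.single (0 : Fin 3) (r n)‖ = r n := by
    rw [PiLp.norm_single, Real.norm_of_nonneg (hr_pos n).le]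
  refine ⟨fun i => EuclideanSpace.single 0 (r i), fun _ => trivial, fun i => ?_,
    fun i j hij => ?_, fun i => ?_⟩
  · rw [hnorm]; exact hr_pos i
  · rw [hnorm, hnorm]; exact hr_mono hij
  · rw [huv, huv, hnorm, hnorm, Fin.val_succ, Fin.val_castSucc, hr_succ]
    exact next_mul (hr i ▸ next_ne _)

theorem ChangesSignAtMostOn.eventually_nonneg_or_nonpos {u : EuclideanSpace ℝ (Fin 3) → ℝ}
    {v : ℝ → ℝ} {P : ℕ} (h : ChangesSignAtMostOn u univ P) (huv : ∀ x, u x = v ‖x‖) :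
    (∀ᶠ r in atTop, 0 ≤ v r) ∨ ∀ᶠ r in atTop, v r ≤ 0 := by
  by_contra! hosc
  exact h (signChangeWitnessOn_univ_of_frequently huv hosc.1 hosc.2 _)

section RadialCalculus

variable {F : Type*} [NormedAddCommGroup F] [InnerProductSpace ℝ F] {v : ℝ → ℝ}

theorem hasFDerivAt_norm {x : F} (hx : x ≠ 0) :
    HasFDerivAt (fun z : F => ‖z‖) (‖x‖⁻¹ • innerSL ℝ x) x := by
  have hsqrt := (Real.hasDerivAt_sqrt (pow_pos (norm_pos_iff.2 hx) 2).ne').comp_hasFDerivAt x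
    (hasStrictFDerivAt_norm_sq x).hasFDerivAt
  simp only [Function.comp_def, Real.sqrt_sq (norm_nonneg _)] at hsqrt
  refine hsqrt.congr_fderiv ?_
  ext z
  simp only [one_div, mul_inv_rev, smul_apply, coe_innerSL_apply, nsmul_eq_mul, Nat.cast_ofNat,
    smul_eq_mul]
  ring

theorem hasFDerivAt_comp_norm {x : F} (hv : DifferentiableAt ℝ v ‖x‖) (hx : x ≠ 0) :
    HasFDerivAt (fun z : F => v ‖z‖) ((deriv v ‖x‖ * ‖x‖⁻¹) • innerSL ℝ x) x := by
  rw [← smul_smul]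
  exact hv.hasDerivAt.comp_hasFDerivAt x (hasFDerivAt_norm hx)

variable {ι : Type*} [Fintype ι] [DecidableEq ι]

theorem fderiv_comp_norm_single (hv : Differentiable ℝ v) {x : EuclideanSpace ℝ ι} (hx : x ≠ 0)
    (i : ι) :
    fderiv ℝ (fun z : EuclideanSpace ℝ ι => v ‖z‖) x (EuclideanSpace.single i 1)
      = deriv v ‖x‖ * ‖x‖⁻¹ * x i := by
  rw [(hasFDerivAt_comp_norm (hv _) hx).fderiv]
  simp [EuclideanSpace.inner_single_right]

theorem fderiv_fderiv_comp_norm_single (hv : ContDiff ℝ 2 v) {x : EuclideanSpace ℝ ι}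
    (hx : x ≠ 0) (i : ι) :
    fderiv ℝ (fun y => fderiv ℝ (fun z : EuclideanSpace ℝ ι => v ‖z‖) y
        (EuclideanSpace.single i 1)) x (EuclideanSpace.single i 1)
      = deriv v ‖x‖ / ‖x‖ + (deriv (deriv v) ‖x‖ / ‖x‖ ^ 2 - deriv v ‖x‖ / ‖x‖ ^ 3) * x i ^ 2 := by
  have hfirst : (fun y => fderiv ℝ (fun z : EuclideanSpace ℝ ι => v ‖z‖) y
      (EuclideanSpace.single i 1)) =ᶠ[𝓝 x] fun y => deriv v ‖y‖ * ‖y‖⁻¹ * y i := by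
    filter_upwards [isOpen_compl_singleton.mem_nhds hx] with y hy
    exact fderiv_comp_norm_single (hv.differentiable two_ne_zero) hy i
  have hinv := (hasDerivAt_inv (norm_pos_iff.2 hx).ne').comp_hasFDerivAt x (hasFDerivAt_norm hx)
  have hprod := ((hasFDerivAt_comp_norm (hv.differentiable_deriv_two _) hx).mul hinv).mul
    (PiLp.proj (𝕜 := ℝ) 2 (fun _ : ι => ℝ) i).hasFDerivAt
  rw [hfirst.fderiv_eq,
    HasFDerivAt.fderiv (f := fun y : EuclideanSpace ℝ ι => deriv v ‖y‖ * ‖y‖⁻¹ * y i) hprod]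
  simp only [Pi.mul_apply, Function.comp_apply, PiLp.proj_apply, neg_smul, smul_neg, smul_add,
    add_apply, smul_apply, PiLp.single_eq_same, smul_eq_mul, mul_one, neg_apply, coe_innerSL_apply,
    EuclideanSpace.inner_single_right, Real.ringHom_apply, one_mul]
  field_simp
  ring

theorem lap3_comp_norm (hv : ContDiff ℝ 2 v) {x : EuclideanSpace ℝ (Fin 3)} (hx : x ≠ 0) :
    lap3 (fun z => v ‖z‖) x = deriv (deriv v) ‖x‖ + 2 * deriv v ‖x‖ / ‖x‖ := by
  have hx0 : ‖x‖ ≠ 0 := norm_ne_zero_iff.2 hx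
  simp only [lap3, fderiv_fderiv_comp_norm_single hv hx, Finset.sum_add_distrib,
    ← Finset.mul_sum, ← EuclideanSpace.real_norm_sq_eq, Finset.sum_const, Finset.card_univ,
    Fintype.card_fin, nsmul_eq_mul]
  field_simp
  ring

end RadialCalculus

theorem IsRadial.lap3_eq {u : EuclideanSpace ℝ (Fin 3) → ℝ} (h : IsRadial u)
    (hu : ContDiff ℝ 2 u) {x : EuclideanSpace ℝ (Fin 3)} (hx : x ≠ 0) :
    lap3 u x = deriv (deriv (radialProfile u)) ‖x‖ + 2 * deriv (radialProfile u) ‖x‖ / ‖x‖ := by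
  rw [← lap3_comp_norm hu.radialProfile hx, ← funext h.eq_radialProfile_norm]

theorem IsRadial.radialProfile_equation {u : EuclideanSpace ℝ (Fin 3) → ℝ} {c : ℝ → ℝ}
    (h : IsRadial u) (hu : ContDiff ℝ 2 u) (hpde : ∀ x, -lap3 u x = c ‖x‖ * u x) {r : ℝ}
    (hr : 0 < r) :
    deriv (deriv (radialProfile u)) r + 2 * deriv (radialProfile u) r / r
      = -(c r * radialProfile u r) := by
  have hnorm := norm_smul_single_zero hr.le
  have hne : r • EuclideanSpace.single (0 : Fin 3) (1 : ℝ) ≠ 0 := by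
    rw [← norm_ne_zero_iff, hnorm]; exact hr.ne'
  have := hpde (r • EuclideanSpace.single 0 1)
  rw [h.lap3_eq hu hne, h.eq_radialProfile_norm, hnorm] at this
  linarith

section RealODE

variable {f f' : ℝ → ℝ} {D : Set ℝ}

theorem monotoneOn_of_hasDerivAt_nonneg (hD : Convex ℝ D) (hf : ∀ x ∈ D, HasDerivAt f (f' x) x)
    (hf' : ∀ x ∈ interior D, 0 ≤ f' x) : MonotoneOn f D :=
  monotoneOn_of_hasDerivWithinAt_nonneg hD (fun x hx => (hf x hx).continuousAt.continuousWithinAt)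
    (fun x hx => (hf x (interior_subset hx)).hasDerivWithinAt) hf'

theorem antitoneOn_of_hasDerivAt_nonpos (hD : Convex ℝ D) (hf : ∀ x ∈ D, HasDerivAt f (f' x) x)
    (hf' : ∀ x ∈ interior D, f' x ≤ 0) : AntitoneOn f D :=
  antitoneOn_of_hasDerivWithinAt_nonpos hD (fun x hx => (hf x hx).continuousAt.continuousWithinAt)
    (fun x hx => (hf x (interior_subset hx)).hasDerivWithinAt) hf'

variable {μ R : ℝ} {w w' g : ℝ → ℝ}

theorem nonneg_of_hasDerivAt_of_antitoneOn (hw : ∀ t ∈ Ioi R, HasDerivAt w (w' t) t)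
    (hanti : AntitoneOn w' (Ioi R)) (hw0 : ∀ t ∈ Ioi R, 0 ≤ w t) : ∀ s ∈ Ioi R, 0 ≤ w' s := by
  intro s hs
  by_contra! hneg
  -- the tangent line at `s` reaches `-1` at `t`, and the concave `w` lies below it
  set t := s + (w s + 1) / -w' s
  have hst : s < t := lt_add_of_pos_right s (div_pos (by linarith [hw0 s hs]) (by linarith))
  have hIcc : Icc s t ⊆ Ioi R := fun x hx => lt_of_lt_of_le hs hx.1
  have hslope : w t - w s ≤ w' s * (t - s) := by
    refine (convex_Icc s t).image_sub_le_mul_sub_of_deriv_le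
      (fun x hx => (hw x (hIcc hx)).continuousAt.continuousWithinAt)
      (fun x hx => (hw x (hIcc (interior_subset hx))).differentiableAt.differentiableWithinAt)
      (fun x hx => ?_) s (left_mem_Icc.2 hst.le) t (right_mem_Icc.2 hst.le) hst.le
    rw [interior_Icc] at hx
    rw [(hw x (hIcc (Ioo_subset_Icc_self hx))).deriv]
    exact hanti hs (hIcc (Ioo_subset_Icc_self hx)) hx.1.le
  have hdrop : w' s * (t - s) = -(w s + 1) := by
    have := hneg.ne
    simp only [t, add_sub_cancel_left]
    field_simp
  linarith [hw0 t (hIcc (right_mem_Icc.2 hst.le))]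

theorem mul_cube_div_le_of_deriv_le_neg_cube (hμ : 0 ≤ μ) (hR : 0 ≤ R)
    (hw' : ∀ t ∈ Ioi R, HasDerivAt w' (g t) t) (hg : ∀ t ∈ Ioi R, g t ≤ -(μ * w t ^ 3 / t ^ 2))
    (hmono : MonotoneOn w (Ioi R)) (hw'0 : ∀ t ∈ Ioi R, 0 ≤ w' t) {r : ℝ} (hr : R < r)
    (hwr : 0 ≤ w r) : μ * w r ^ 3 / (2 * r) ≤ w' r := by
  have hr0 : 0 < r := hR.trans_lt hr
  set C := μ * w r ^ 3
  have hIci : Ici r ⊆ Ioi R := Ici_subset_Ioi.2 hr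
  have hφ : ∀ t ∈ Ici r, HasDerivAt (fun t => w' t - C * t⁻¹) (g t - C * -(t ^ 2)⁻¹) t :=
    fun t ht => (hw' t (hIci ht)).sub ((hasDerivAt_inv (hr0.trans_le ht).ne').const_mul C)
  have hanti := antitoneOn_of_hasDerivAt_nonpos (convex_Ici r) hφ fun t ht => by
    rw [interior_Ici] at ht
    have hcube : C ≤ μ * w t ^ 3 := mul_le_mul_of_nonneg_left
      (pow_le_pow_left₀ hwr (hmono hr (hIci (mem_Ici.2 ht.le)) ht.le) 3) hμ
    have := hg t (hIci (mem_Ici.2 ht.le))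
    rw [div_eq_mul_inv] at this
    nlinarith [inv_nonneg.2 (sq_nonneg t)]
  have h2r : w' (2 * r) - C * (2 * r)⁻¹ ≤ w' r - C * r⁻¹ :=
    hanti self_mem_Ici (by simp only [mem_Ici]; linarith) (by linarith)
  have hhalf : C * r⁻¹ - C * (2 * r)⁻¹ = C / (2 * r) := by field_simp; ring
  linarith [hw'0 (2 * r) (hIci (by simp only [mem_Ici]; linarith))]

theorem false_of_mul_cube_div_le_deriv {r₁ : ℝ} (hμ : 0 < μ) (hr₁ : 0 < r₁)
    (hw : ∀ t ∈ Ici r₁, HasDerivAt w (w' t) t) (hpos : ∀ t ∈ Ici r₁, 0 < w t)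
    (hw' : ∀ t ∈ Ici r₁, μ * w t ^ 3 / (2 * t) ≤ w' t) : False := by
  set h : ℝ → ℝ := fun t => (w t ^ 2)⁻¹ + μ * Real.log t
  have hanti : AntitoneOn h (Ici r₁) := by
    refine antitoneOn_of_hasDerivAt_nonpos (convex_Ici r₁)
      (f' := fun t => -((2 : ℕ) * w t ^ (2 - 1) * w' t) / (w t ^ 2) ^ 2 + μ * t⁻¹)
      (fun t ht => ?_) (fun t ht => ?_)
    · exact (((hw t ht).pow 2).inv (pow_ne_zero 2 (hpos t ht).ne')).add
        ((Real.hasDerivAt_log (hr₁.trans_le ht).ne').const_mul μ)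
    · rw [interior_Ici, mem_Ioi] at ht
      have ht0 : 0 < t := hr₁.trans ht
      have hwt := hpos t ht.le
      have key : μ * w t ^ 3 ≤ 2 * t * w' t := by
        have := hw' t ht.le
        rw [div_le_iff₀ (by positivity)] at this
        linarith
      rw [show -((2 : ℕ) * w t ^ (2 - 1) * w' t) / (w t ^ 2) ^ 2 + μ * t⁻¹
          = (μ * w t ^ 3 - 2 * t * w' t) / (t * w t ^ 3) by field_simp; ring]
      exact div_nonpos_of_nonpos_of_nonneg (by linarith) (by positivity)
  obtain ⟨t, hlog, ht⟩ := (((Real.tendsto_log_atTop.const_mul_atTop hμ).eventually_gt_atTop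
    (h r₁)).and (eventually_ge_atTop r₁)).exists
  have := hanti self_mem_Ici ht ht
  have : 0 < (w t ^ 2)⁻¹ := by have := hpos t ht; positivity
  simp only [h] at *
  linarith

theorem eqOn_zero_of_deriv_le_neg_cube (hμ : 0 < μ) (hR : 0 ≤ R)
    (hw : ∀ t ∈ Ioi R, HasDerivAt w (w' t) t) (hw' : ∀ t ∈ Ioi R, HasDerivAt w' (g t) t)
    (hg : ∀ t ∈ Ioi R, g t ≤ -(μ * w t ^ 3 / t ^ 2)) (hw0 : ∀ t ∈ Ioi R, 0 ≤ w t) :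
    EqOn w 0 (Ioi R) := by
  have hanti : AntitoneOn w' (Ioi R) := antitoneOn_of_hasDerivAt_nonpos (convex_Ioi R) hw'
    fun t ht => by
      rw [interior_Ioi] at ht
      have : 0 ≤ μ * w t ^ 3 / t ^ 2 := by have := hw0 t ht; positivity
      linarith [hg t ht]
  have hw'0 := nonneg_of_hasDerivAt_of_antitoneOn hw hanti hw0
  have hmono : MonotoneOn w (Ioi R) := monotoneOn_of_hasDerivAt_nonneg (convex_Ioi R) hw
    fun t ht => hw'0 t (interior_subset ht)
  intro r₁ hr₁
  by_contra hne
  have hIci : Ici r₁ ⊆ Ioi R := Ici_subset_Ioi.2 hr₁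
  have hpos : ∀ t ∈ Ici r₁, 0 < w t := fun t ht =>
    (lt_of_le_of_ne (hw0 r₁ hr₁) (Ne.symm hne)).trans_le (hmono hr₁ (hIci ht) ht)
  exact false_of_mul_cube_div_le_deriv hμ (hR.trans_lt hr₁) (fun t ht => hw t (hIci ht)) hpos
    fun t ht => mul_cube_div_le_of_deriv_le_neg_cube hμ.le hR hw' hg hmono hw'0 (hIci ht)
      (hpos t ht).le

end RealODE

theorem eqOn_zero_of_hasDerivAt_neg_mul {c w w' : ℝ → ℝ} {a b : ℝ}
    (hc : ContinuousOn c (Icc a b)) (hw : ∀ t ∈ Icc a b, HasDerivAt w (w' t) t)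
    (hw' : ∀ t ∈ Icc a b, HasDerivAt w' (-(c t * w t)) t) (hb : w b = 0) (hb' : w' b = 0) :
    EqOn w 0 (Icc a b) := by
  obtain ⟨K, hK⟩ := isCompact_Icc.exists_bound_of_continuousOn hc
  set V : ℝ → ℝ × ℝ → ℝ × ℝ := fun t p => (p.2, -(c t * p.1))
  have hV : ∀ t ∈ Ioc a b, LipschitzOnWith (max 1 K).toNNReal (V t) univ := fun t ht =>
    (LipschitzWith.of_dist_le_mul fun p q => by
      simp only [V, Prod.dist_eq, Real.dist_eq, Real.coe_toNNReal _ (le_max_of_le_left zero_le_one)]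
      have hK1 : 0 ≤ max 1 K := zero_le_one.trans (le_max_left _ _)
      refine max_le ?_ ?_
      · exact (le_max_right _ _).trans (le_mul_of_one_le_left (by positivity) (le_max_left _ _))
      · rw [show -(c t * p.1) - -(c t * q.1) = -(c t * (p.1 - q.1)) by ring, abs_neg, abs_mul]
        exact mul_le_mul ((hK t (Ioc_subset_Icc_self ht)).trans (le_max_right _ _))
          (le_max_left _ _) (abs_nonneg _) hK1).lipschitzOnWith
  have hsol := ODE_solution_unique_of_mem_Icc_left (v := V) (s := fun _ => univ)
    (f := fun t => (w t, w' t)) (g := fun _ => 0) hV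
    (fun t ht => ((hw t ht).prodMk (hw' t ht)).continuousAt.continuousWithinAt)
    (fun t ht => ((hw t (Ioc_subset_Icc_self ht)).prodMk
      (hw' t (Ioc_subset_Icc_self ht))).hasDerivWithinAt)
    (fun _ _ => trivial) continuousOn_const
    (fun t _ => by convert hasDerivWithinAt_const t (Iic t) (0 : ℝ × ℝ); simp [V])
    (fun _ _ => trivial) (by simp [hb, hb'])
  exact fun t ht => congrArg Prod.fst (hsol ht)

section RadialEquation

variable {μ : ℝ} {v c : ℝ → ℝ}

theorem hasDerivAt_id_mul {r : ℝ} (hv : DifferentiableAt ℝ v r) :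
    HasDerivAt (fun t => t * v t) (v r + r * deriv v r) r := by
  simpa using (hasDerivAt_id' r).fun_mul hv.hasDerivAt

-- With `w = r v`, this says `w'' = -c w`.
theorem hasDerivAt_add_mul_deriv (hv : ContDiff ℝ 2 v)
    (heq : ∀ r > 0, deriv (deriv v) r + 2 * deriv v r / r = -(c r * v r)) {r : ℝ} (hr : 0 < r) :
    HasDerivAt (fun t => v t + t * deriv v t) (-(c r * (r * v r))) r := by
  refine ((hv.differentiable two_ne_zero r).hasDerivAt.add
    ((hasDerivAt_id' r).fun_mul (hv.differentiable_deriv_two r).hasDerivAt)).congr_deriv ?_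
  have := heq r hr
  field_simp at this
  linear_combination this

theorem eventually_eq_zero_of_radial_equation (hμ : 0 < μ) (hv : ContDiff ℝ 2 v)
    (hcv : ∀ r > 0, μ * v r ^ 2 ≤ c r)
    (heq : ∀ r > 0, deriv (deriv v) r + 2 * deriv v r / r = -(c r * v r))
    (hsign : (∀ᶠ r in atTop, 0 ≤ v r) ∨ ∀ᶠ r in atTop, v r ≤ 0) :
    ∀ᶠ r in atTop, v r = 0 := by
  -- the equation is invariant under `v ↦ -v`
  suffices h : ∀ s : ℝ, s ^ 2 = 1 → (∀ᶠ r in atTop, 0 ≤ s * v r) → ∀ᶠ r in atTop, v r = 0 by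
    rcases hsign with hsign | hsign
    · exact h 1 (one_pow 2) (by simpa using hsign)
    · exact h (-1) (by norm_num) (by simpa using hsign)
  intro s hs hsv
  obtain ⟨R, hR⟩ := eventually_atTop.1 hsv
  have hpos (t : ℝ) (ht : t ∈ Ioi (max R 0)) : 0 < t := (le_max_right R 0).trans_lt ht
  have hw0 (t : ℝ) (ht : t ∈ Ioi (max R 0)) : 0 ≤ s * (t * v t) := by
    rw [mul_left_comm]
    exact mul_nonneg (hpos t ht).le (hR t ((le_max_left R 0).trans ht.le))
  have hcube (t : ℝ) (ht : t ∈ Ioi (max R 0)) :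
      -(c t * (s * (t * v t))) ≤ -(μ * (s * (t * v t)) ^ 3 / t ^ 2) := by
    have := hpos t ht
    rw [show μ * (s * (t * v t)) ^ 3 / t ^ 2 = μ * v t ^ 2 * (s * (t * v t)) by
      rw [div_eq_iff (by positivity)]
      linear_combination μ * t ^ 3 * v t ^ 3 * s * hs]
    exact neg_le_neg (mul_le_mul_of_nonneg_right (hcv t (hpos t ht)) (hw0 t ht))
  have hzero := eqOn_zero_of_deriv_le_neg_cube hμ (le_max_right R 0)
    (fun t _ => (hasDerivAt_id_mul (hv.differentiable two_ne_zero t)).const_mul s)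
    (fun t ht => ((hasDerivAt_add_mul_deriv hv heq (hpos t ht)).const_mul s).congr_deriv
      (by ring)) hcube hw0
  have hs0 : s ≠ 0 := by rintro rfl; norm_num at hs
  filter_upwards [eventually_gt_atTop (max R 0)] with t ht
  simpa [hs0, (hpos t ht).ne'] using hzero ht

theorem eq_zero_of_radial_equation (hμ : 0 < μ) (hv : ContDiff ℝ 2 v) (hc : Continuous c)
    (hcv : ∀ r > 0, μ * v r ^ 2 ≤ c r)
    (heq : ∀ r > 0, deriv (deriv v) r + 2 * deriv v r / r = -(c r * v r))
    (hsign : (∀ᶠ r in atTop, 0 ≤ v r) ∨ ∀ᶠ r in atTop, v r ≤ 0) {r : ℝ} (hr : 0 ≤ r) :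
    v r = 0 := by
  obtain ⟨R, hR⟩ := eventually_atTop.1 (eventually_eq_zero_of_radial_equation hμ hv hcv heq hsign)
  have hpos : ∀ a > 0, v a = 0 := by
    intro a ha
    set b := max R a + 1
    have hab : a ≤ b := by linarith [le_max_right R a]
    have hvb : v =ᶠ[𝓝 b] 0 := by
      filter_upwards [Ioi_mem_nhds (lt_add_one (max R a))] with t ht
      exact hR t ((le_max_left R a).trans ht.le)
    have hIcc : Icc a b ⊆ Ioi 0 := fun t ht => ha.trans_le ht.1
    have hzero := eqOn_zero_of_hasDerivAt_neg_mul hc.continuousOn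
      (fun t _ => hasDerivAt_id_mul (hv.differentiable two_ne_zero t))
      (fun t ht => hasDerivAt_add_mul_deriv hv heq (hIcc ht))
      (by simp [hvb.eq_of_nhds]) (by simp [hvb.eq_of_nhds, hvb.deriv_eq]) (left_mem_Icc.2 hab)
    simpa [ha.ne'] using hzero
  rcases hr.eq_or_lt with rfl | hr
  · exact tendsto_nhds_unique_of_eventuallyEq
      (hv.continuous.tendsto 0 |>.mono_left nhdsWithin_le_nhds) tendsto_const_nhds
      (eventually_nhdsWithin_of_forall (s := Ioi 0) hpos)
  · exact hpos r hr

end RadialEquation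

theorem liouville_R3_nonneg_general (N : ℕ) (μ : Fin N → ℝ) (hμ : ∀ j, 0 < μ j)
    (P : Fin N → ℕ) (B : Fin N → Fin N → ℝ)
    (hBpos : ∀ i j, i ≠ j → 0 ≤ B i j) :
        ∀ u : Fin N → EuclideanSpace ℝ (Fin 3) → ℝ,
          (∀ j, IsRadial (u j)) →
          (∀ j, ContDiff ℝ 2 (u j)) →
          (∀ j x, |u j x| ≤ 1) →
          (∀ j, (∀ x, u j x = 0) ∨ ChangesSignAtMostOn (u j) Set.univ (P j)) →
          (∀ j x, -lap3 (u j) x =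
              μ j * u j x ^ 3 + ∑ i ∈ Finset.univ.erase j, B i j * u i x ^ 2 * u j x) →
          ∀ j x, u j x = 0 := by
  intro u hrad hC2 _ hsign hpde j x
  rcases hsign j with hzero | hsign
  · exact hzero x
  set v : Fin N → ℝ → ℝ := fun i => radialProfile (u i)
  have huv (i : Fin N) : ∀ y, u i y = v i ‖y‖ := (hrad i).eq_radialProfile_norm
  have hv (i : Fin N) : ContDiff ℝ 2 (v i) := (hC2 i).radialProfile
  set c : ℝ → ℝ := fun r => μ j * v j r ^ 2 + ∑ i ∈ Finset.univ.erase j, B i j * v i r ^ 2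
  have hc : Continuous c := by
    have := fun i => (hv i).continuous
    fun_prop
  have hcv (r : ℝ) : μ j * v j r ^ 2 ≤ c r := le_add_of_nonneg_right <| Finset.sum_nonneg
    fun i hi => mul_nonneg (hBpos i j (Finset.ne_of_mem_erase hi)) (sq_nonneg _)
  have hpde_c (y : EuclideanSpace ℝ (Fin 3)) : -lap3 (u j) y = c ‖y‖ * u j y := by
    simp only [hpde, c, huv _ y, add_mul, Finset.sum_mul]
    ring
  rw [huv]
  exact eq_zero_of_radial_equation (hμ j) (hv j) hc (fun r _ => hcv r)
    (fun r hr => (hrad j).radialProfile_equation (hC2 j) hpde_c hr)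
    (hsign.eventually_nonneg_or_nonpos (huv j)) (norm_nonneg x)

theorem liouville_R3_nonneg (N : ℕ) (hN : 2 ≤ N) (μ : Fin N → ℝ) (hμ : ∀ j, 0 < μ j)
    (P : Fin N → ℕ) (B : Fin N → Fin N → ℝ)
    (hBsymm : ∀ i j, i ≠ j → B i j = B j i)
    (hBpos : ∀ i j, i ≠ j → 0 ≤ B i j) :
        ∀ u : Fin N → EuclideanSpace ℝ (Fin 3) → ℝ,
          (∀ j, IsRadial (u j)) →
          (∀ j, ContDiff ℝ 2 (u j)) →
          (∀ j x, |u j x| ≤ 1) →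
          (∀ j, (∀ x, u j x = 0) ∨ ChangesSignAtMostOn (u j) Set.univ (P j)) →
          (∀ j x, -lap3 (u j) x =
              μ j * u j x ^ 3 + ∑ i ∈ Finset.univ.erase j, B i j * u i x ^ 2 * u j x) →
          ∀ j x, u j x = 0 :=
  liouville_R3_nonneg_general N μ hμ P B hBpos
end

section
/- Let N ≥ 2, let μ₁,…,μ_N > 0 be constants, let P₁,…,P_N ∈ ℕ, and let β ≥ 0. Then there exists a constant ε₂ = ε₂(μ₁,…,μ_N; P₁,…,P_N; β) > 0 with the following property: whenever real constants β_{ij} = β_{ji} (for i ≠ j) satisfy β_{ij} ∈ [−ε₂, β], and u₁,…,u_N : ℝ → ℝ are functions of class C² such that for every j one has |u_j(t)| ≤ 1 for all t ∈ ℝ, u_j is either identically zero or changes sign at most P_j times, and −u_j'' = μ_j u_j³ + Σ_{i≠j} β_{ij} u_i² u_j holds pointwise on ℝ, then u_j ≡ 0 for every j = 1,…,N. -/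
open scoped BigOperators

/-- There are `k + 1` increasing points of `I` on which `u` successively changes sign
`k` times. -/
def SignChangeWitness1D (u : ℝ → ℝ) (I : Set ℝ) (k : ℕ) : Prop :=
  ∃ t : Fin (k + 1) → ℝ, (∀ i, t i ∈ I) ∧ StrictMono t ∧
    (∀ i : Fin k, u (t i.castSucc) * u (t i.succ) < 0)

/-- `u` changes sign at most `P` times on `I`. -/
def ChangesSignAtMost1D (u : ℝ → ℝ) (I : Set ℝ) (P : ℕ) : Prop :=
  ¬ SignChangeWitness1D u I (P + 1)

/-!
Flip signs so that every `vⱼ = σⱼ uⱼ` (`σⱼ = ±1`) is eventually nonnegative, which finitely many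
sign changes allow; the system is invariant under such flips. When `βᵢⱼ ≥ -ε` with `ε` small
against `min μⱼ`, the sum `S = ∑ vⱼ` satisfies `S'' ≤ -κ ∑ vⱼ³ ≤ -(κ / N²) S³` on a half-line.
There `S ≥ 0` is concave, hence nondecreasing; were it ever positive, `S''` would stay below a
negative constant and drive `S'` below zero. So all `uⱼ` vanish near `+∞`, and since each `uⱼ`
solves a linear equation `uⱼ'' = gⱼ uⱼ` with continuous `gⱼ`, an energy estimate for
`uⱼ² + uⱼ'²` propagates the vanishing to all of `ℝ`.
-/

open Filter

section SignChanges

lemma signChangeWitness1D_of_frequently {u : ℝ → ℝ} (hpos : ∃ᶠ t in atTop, 0 < u t)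
    (hneg : ∃ᶠ t in atTop, u t < 0) (k : ℕ) : SignChangeWitness1D u Set.univ k := by
  have step : ∀ x : {x // u x ≠ 0}, ∃ y : {y // u y ≠ 0}, x.1 < y.1 ∧ u x * u y < 0 := by
    rintro ⟨x, hx⟩
    rcases hx.lt_or_gt with hx | hx
    · obtain ⟨y, hxy, hy⟩ := frequently_atTop.mp hpos (x + 1)
      exact ⟨⟨y, hy.ne'⟩, by linarith, mul_neg_of_neg_of_pos hx hy⟩
    · obtain ⟨y, hxy, hy⟩ := frequently_atTop.mp hneg (x + 1)
      exact ⟨⟨y, hy.ne⟩, by linarith, mul_neg_of_pos_of_neg hx hy⟩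
  choose next hnext using step
  obtain ⟨x₀, -, hx₀⟩ := frequently_atTop.mp hpos 0
  let t : ℕ → {x // u x ≠ 0} := fun n => next^[n] ⟨x₀, hx₀.ne'⟩
  have ht : ∀ n, t (n + 1) = next (t n) := fun n => Function.iterate_succ_apply' next n _
  have hmono : StrictMono fun n => (t n).1 :=
    strictMono_nat_of_lt_succ fun n => by rw [ht]; exact (hnext _).1
  refine ⟨fun i => (t i).1, fun _ => Set.mem_univ _, hmono.comp Fin.val_strictMono, fun i => ?_⟩
  simpa [ht] using (hnext (t i)).2

lemma ChangesSignAtMost1D.exists_sign_eventually_nonneg {u : ℝ → ℝ} {P : ℕ}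
    (h : ChangesSignAtMost1D u Set.univ P) :
    ∃ σ : ℝ, σ ^ 2 = 1 ∧ ∀ᶠ t in atTop, 0 ≤ σ * u t := by
  by_cases hnonneg : ∀ᶠ t in atTop, 0 ≤ u t
  · exact ⟨1, one_pow 2, by simpa using hnonneg⟩
  by_cases hnonpos : ∀ᶠ t in atTop, u t ≤ 0
  · exact ⟨-1, by norm_num, by simpa using hnonpos⟩
  simp only [not_eventually, not_le] at hnonneg hnonpos
  exact absurd (signChangeWitness1D_of_frequently hnonpos hnonneg _) h

end SignChanges

section CoupledCubic

variable {ι : Type*} [Fintype ι] [DecidableEq ι]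

def coupledCubic (μ : ι → ℝ) (B : ι → ι → ℝ) (w : ι → ℝ) (j : ι) : ℝ :=
  μ j * w j ^ 3 + ∑ i ∈ Finset.univ.erase j, B i j * w i ^ 2 * w j

lemma coupledCubic_eq_mul (μ : ι → ℝ) (B : ι → ι → ℝ) (w : ι → ℝ) (j : ι) :
    coupledCubic μ B w j = (μ j * w j ^ 2 + ∑ i ∈ Finset.univ.erase j, B i j * w i ^ 2) * w j := by
  rw [coupledCubic, add_mul, Finset.sum_mul]
  ring

lemma coupledCubic_mul_sign {σ : ι → ℝ} (hσ : ∀ i, σ i ^ 2 = 1) (μ : ι → ℝ) (B : ι → ι → ℝ)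
    (w : ι → ℝ) (j : ι) :
    coupledCubic μ B (fun i => σ i * w i) j = σ j * coupledCubic μ B w j := by
  rw [coupledCubic, coupledCubic, mul_add, Finset.mul_sum]
  congr 1
  · linear_combination μ j * w j ^ 3 * σ j * hσ j
  · refine Finset.sum_congr rfl fun i _ => ?_
    linear_combination B i j * w i ^ 2 * σ j * w j * hσ i

variable {μ : ι → ℝ} {B : ι → ι → ℝ} {m ε : ℝ} {w : ι → ℝ}

lemma coupledCubic_ge (hμ : ∀ j, m ≤ μ j) (hε : 0 ≤ ε) (hB : ∀ i j, i ≠ j → -ε ≤ B i j)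
    (hw : ∀ j, 0 ≤ w j) (j : ι) :
    m * w j ^ 3 - ε * (∑ i, w i ^ 3 + Fintype.card ι * w j ^ 3) ≤ coupledCubic μ B w j := by
  have hcube : ∀ i, 0 ≤ w i ^ 3 := fun i => pow_nonneg (hw i) 3
  have hpair : ∀ i ∈ Finset.univ.erase j,
      -(ε * (w i ^ 3 + w j ^ 3)) ≤ B i j * w i ^ 2 * w j := by
    intro i hi
    have hamgm : w i ^ 2 * w j ≤ w i ^ 3 + w j ^ 3 := by
      nlinarith [hw i, hw j, sq_nonneg (w i - w j), mul_nonneg (hw i) (hw j)]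
    nlinarith [hB i j (Finset.ne_of_mem_erase hi), mul_nonneg (sq_nonneg (w i)) (hw j)]
  have hextend : ∑ i ∈ Finset.univ.erase j, ε * (w i ^ 3 + w j ^ 3) ≤
      ε * (∑ i, w i ^ 3 + Fintype.card ι * w j ^ 3) := by
    calc ∑ i ∈ Finset.univ.erase j, ε * (w i ^ 3 + w j ^ 3)
        ≤ ∑ i, ε * (w i ^ 3 + w j ^ 3) :=
          Finset.sum_le_sum_of_subset_of_nonneg (Finset.erase_subset _ _)
            fun i _ _ => mul_nonneg hε (add_nonneg (hcube i) (hcube j))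
      _ = ε * (∑ i, w i ^ 3 + Fintype.card ι * w j ^ 3) := by
          rw [← Finset.mul_sum, Finset.sum_add_distrib, Finset.sum_const, Finset.card_univ,
            nsmul_eq_mul]
  have hsum := Finset.sum_le_sum hpair
  rw [Finset.sum_neg_distrib] at hsum
  have hdiag := mul_le_mul_of_nonneg_right (hμ j) (hcube j)
  rw [coupledCubic]
  linarith

lemma sum_coupledCubic_ge (hμ : ∀ j, m ≤ μ j) (hε : 0 ≤ ε) (hB : ∀ i j, i ≠ j → -ε ≤ B i j)
    (hw : ∀ j, 0 ≤ w j) :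
    (m - 2 * Fintype.card ι * ε) * ∑ j, w j ^ 3 ≤ ∑ j, coupledCubic μ B w j :=
  calc (m - 2 * Fintype.card ι * ε) * ∑ j, w j ^ 3
      = ∑ j, (m * w j ^ 3 - ε * (∑ i, w i ^ 3 + Fintype.card ι * w j ^ 3)) := by
        simp only [Finset.sum_sub_distrib, ← Finset.mul_sum, Finset.sum_add_distrib,
          Finset.sum_const, Finset.card_univ, nsmul_eq_mul]
        ring
    _ ≤ ∑ j, coupledCubic μ B w j := Finset.sum_le_sum fun j _ => coupledCubic_ge hμ hε hB hw j

end CoupledCubic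

section HalfLine

variable {f : ℝ → ℝ} {a : ℝ}

lemma exists_lt_zero_of_deriv_le_neg (hf : Differentiable ℝ f) {c : ℝ} (hc : 0 < c)
    (hf' : ∀ t ≥ a, deriv f t ≤ -c) : ∃ t ≥ a, f t < 0 := by
  set t := a + (|f a| + 1) / c
  have hat : a ≤ t := le_add_of_nonneg_right (by positivity)
  have hdrop := (convex_Ici a).image_sub_le_mul_sub_of_deriv_le hf.continuous.continuousOn
    hf.differentiableOn (fun x hx => hf' x (interior_subset hx)) a Set.self_mem_Ici t hat hat
  have hstep : -c * (t - a) = -(|f a| + 1) := by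
    simp only [t]
    field_simp
    ring
  exact ⟨t, hat, by linarith [le_abs_self (f a)]⟩

lemma deriv_nonneg_of_nonneg_of_deriv2_nonpos (hf : ContDiff ℝ 2 f) (hf0 : ∀ t ≥ a, 0 ≤ f t)
    (hf'' : ∀ t ≥ a, deriv (deriv f) t ≤ 0) : ∀ t ≥ a, 0 ≤ deriv f t := by
  intro t ht
  by_contra! hneg
  have hanti : AntitoneOn (deriv f) (Set.Ici t) :=
    antitoneOn_of_deriv_nonpos (convex_Ici t) hf.differentiable_deriv_two.continuous.continuousOn
      hf.differentiable_deriv_two.differentiableOn fun x hx =>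
        hf'' x (ht.trans (interior_subset hx))
  obtain ⟨s, hs, hfs⟩ := exists_lt_zero_of_deriv_le_neg (hf.differentiable two_ne_zero)
    (neg_pos.mpr hneg) fun s hs => by
      rw [neg_neg]
      exact hanti Set.self_mem_Ici hs hs
  exact hfs.not_ge (hf0 s (ht.trans hs))

lemma eq_zero_of_nonneg_of_deriv2_le_neg_cube (hf : ContDiff ℝ 2 f) {κ : ℝ} (hκ : 0 < κ)
    (hf0 : ∀ t ≥ a, 0 ≤ f t) (hf'' : ∀ t ≥ a, deriv (deriv f) t ≤ -κ * f t ^ 3) :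
    ∀ t ≥ a, f t = 0 := by
  have hf' := deriv_nonneg_of_nonneg_of_deriv2_nonpos hf hf0 fun t ht =>
    (hf'' t ht).trans (by nlinarith [pow_nonneg (hf0 t ht) 3])
  have hmono : MonotoneOn f (Set.Ici a) :=
    monotoneOn_of_deriv_nonneg (convex_Ici a) (hf.continuous.continuousOn)
      (hf.differentiable two_ne_zero).differentiableOn fun x hx => hf' x (interior_subset hx)
  intro t ht
  by_contra hne
  have hpos : 0 < f t := (hf0 t ht).lt_of_ne' hne
  obtain ⟨s, hs, hfs⟩ := exists_lt_zero_of_deriv_le_neg hf.differentiable_deriv_two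
    (mul_pos hκ (pow_pos hpos 3)) fun s hs => by
      have hts : f t ≤ f s := hmono ht (ht.trans hs) hs
      calc deriv (deriv f) s ≤ -κ * f s ^ 3 := hf'' s (ht.trans hs)
        _ ≤ -(κ * f t ^ 3) := by
          rw [neg_mul, neg_le_neg_iff]
          exact mul_le_mul_of_nonneg_left (pow_le_pow_left₀ hpos.le hts 3) hκ.le
  exact hfs.not_ge (hf' s (ht.trans hs))

end HalfLine

lemma eq_zero_of_deriv2_eq_mul_of_eq_zero {u g : ℝ → ℝ} (hu : ContDiff ℝ 2 u) (hg : Continuous g)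
    (heq : ∀ t, deriv (deriv u) t = g t * u t) {a : ℝ} (ha : u a = 0) (ha' : deriv u a = 0) :
    ∀ t ≤ a, u t = 0 := by
  intro t hta
  obtain ⟨K, hK⟩ := isCompact_Icc.exists_bound_of_continuousOn (s := Set.Icc t a)
    (f := fun s => 1 + g s) (by fun_prop)
  set E : ℝ → ℝ := fun s => u s ^ 2 + deriv u s ^ 2
  have hu' : Differentiable ℝ u := hu.differentiable two_ne_zero
  have hE : ∀ s, HasDerivAt E (2 * (1 + g s) * u s * deriv u s) s := fun s => by
    refine (((hu' s).hasDerivAt.fun_pow 2).fun_add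
      ((hu.differentiable_deriv_two s).hasDerivAt.fun_pow 2)).congr_deriv ?_
    rw [heq]
    ring
  -- Gronwall: `|E'| ≤ K E` on `[t, a]`, so `E(s) e^{K s}` is nondecreasing there.
  have hmono : MonotoneOn (fun s => E s * Real.exp (K * s)) (Set.Icc t a) := by
    have hF : ∀ s, HasDerivAt (fun s => E s * Real.exp (K * s))
        ((2 * (1 + g s) * u s * deriv u s + K * E s) * Real.exp (K * s)) s := fun s => by
      refine ((hE s).fun_mul ((hasDerivAt_id' s).const_mul K).exp).congr_deriv ?_
      ring
    refine monotoneOn_of_deriv_nonneg (convex_Icc t a)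
      (fun s _ => (hF s).continuousAt.continuousWithinAt)
      (fun s _ => (hF s).differentiableAt.differentiableWithinAt) fun s hs => ?_
    rw [(hF s).deriv]
    obtain ⟨hlo, hhi⟩ := abs_le.mp (hK s (interior_subset hs))
    refine mul_nonneg ?_ (Real.exp_pos _).le
    nlinarith [mul_nonneg (by linarith : 0 ≤ K + (1 + g s)) (sq_nonneg (u s + deriv u s)),
      mul_nonneg (by linarith : 0 ≤ K - (1 + g s)) (sq_nonneg (u s - deriv u s))]
  have hEt : E t * Real.exp (K * t) ≤ 0 := by
    simpa [E, ha, ha'] using hmono ⟨le_rfl, hta⟩ ⟨hta, le_rfl⟩ hta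
  have hEt' : E t ≤ 0 := nonpos_of_mul_nonpos_left hEt (Real.exp_pos _)
  nlinarith [sq_nonneg (u t), sq_nonneg (deriv u t)]

lemma eq_zero_of_deriv2_eq_mul_of_eventually_eq_zero {u g : ℝ → ℝ} (hu : ContDiff ℝ 2 u)
    (hg : Continuous g) (heq : ∀ t, deriv (deriv u) t = g t * u t)
    (hzero : ∀ᶠ t in atTop, u t = 0) : ∀ t, u t = 0 := by
  obtain ⟨a, ha⟩ := eventually_atTop.mp hzero
  have hderiv : deriv u (a + 1) = 0 := by
    have hlocal : u =ᶠ[nhds (a + 1)] fun _ => 0 :=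
      eventually_of_mem (Ioi_mem_nhds (lt_add_one a)) fun s hs => ha s (le_of_lt hs)
    simp [hlocal.deriv_eq]
  intro t
  rcases le_total t (a + 1) with hta | hta
  · exact eq_zero_of_deriv2_eq_mul_of_eq_zero hu hg heq (ha _ (by linarith)) hderiv t hta
  · exact ha t (by linarith)

section CoupledSystem

variable {ι : Type*} [Fintype ι] [DecidableEq ι] {μ : ι → ℝ} {B : ι → ι → ℝ} {m ε : ℝ}
  {u : ι → ℝ → ℝ}

lemma eventually_eq_zero_of_eventually_nonneg (hμ : ∀ j, m ≤ μ j) (hε : 0 ≤ ε)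
    (hκ : 0 < m - 2 * Fintype.card ι * ε) (hB : ∀ i j, i ≠ j → -ε ≤ B i j)
    (hu : ∀ j, ContDiff ℝ 2 (u j))
    (heq : ∀ j t, -deriv (deriv (u j)) t = coupledCubic μ B (fun i => u i t) j)
    (hnonneg : ∀ᶠ t in atTop, ∀ j, 0 ≤ u j t) (j : ι) : ∀ᶠ t in atTop, u j t = 0 := by
  obtain ⟨a, ha⟩ := eventually_atTop.mp hnonneg
  have : Nonempty ι := ⟨j⟩
  set κ := m - 2 * Fintype.card ι * ε
  set S : ℝ → ℝ := fun t => ∑ i, u i t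
  have hS : ContDiff ℝ 2 S := by fun_prop
  have hS'' : ∀ t, deriv (deriv S) t = ∑ i, deriv (deriv (u i)) t := fun t => by
    have hS' : deriv S = fun t => ∑ i, deriv (u i) t := funext fun t =>
      deriv_fun_sum fun i _ => ((hu i).differentiable two_ne_zero).differentiableAt
    rw [hS']
    exact deriv_fun_sum fun i _ => ((hu i).differentiable_deriv_two).differentiableAt
  -- Jensen's inequality `S³ ≤ n² ∑ uᵢ³` turns the system into a scalar inequality for `S`.
  have hSineq : ∀ t ≥ a, deriv (deriv S) t ≤ -(κ / Fintype.card ι ^ 2) * S t ^ 3 := by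
    intro t ht
    have hjensen := pow_sum_div_card_le_sum_pow (s := Finset.univ) (fun i _ => ha t ht i) 2
    have hcoer := sum_coupledCubic_ge hμ hε hB (w := fun i => u i t) (ha t ht)
    rw [Finset.card_univ] at hjensen
    calc deriv (deriv S) t = -∑ i, coupledCubic μ B (fun i => u i t) i := by
          rw [hS'', ← Finset.sum_neg_distrib]
          exact Finset.sum_congr rfl fun i _ => by rw [← heq i t, neg_neg]
      _ ≤ -(κ * (S t ^ 3 / Fintype.card ι ^ 2)) := by
          gcongr
          exact (mul_le_mul_of_nonneg_left hjensen hκ.le).trans hcoer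
      _ = -(κ / Fintype.card ι ^ 2) * S t ^ 3 := by ring
  have hSzero := eq_zero_of_nonneg_of_deriv2_le_neg_cube hS (by positivity)
    (fun t ht => Finset.sum_nonneg fun i _ => ha t ht i) hSineq
  filter_upwards [eventually_ge_atTop a] with t ht
  exact (Finset.sum_eq_zero_iff_of_nonneg fun i _ => ha t ht i).mp (hSzero t ht) j
    (Finset.mem_univ j)

end CoupledSystem

theorem liouville_1d_line_general (N : ℕ) (μ : Fin N → ℝ) (hμ : ∀ j, 0 < μ j)
    (P : Fin N → ℕ) (β : ℝ) :
    ∃ ε₂ : ℝ, 0 < ε₂ ∧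
      ∀ B : Fin N → Fin N → ℝ,
        (∀ i j, i ≠ j → B i j = B j i) →
        (∀ i j, i ≠ j → -ε₂ ≤ B i j ∧ B i j ≤ β) →
        ∀ u : Fin N → ℝ → ℝ,
          (∀ j, ContDiff ℝ 2 (u j)) →
          (∀ j t, |u j t| ≤ 1) →
          (∀ j, (∀ t, u j t = 0) ∨ ChangesSignAtMost1D (u j) Set.univ (P j)) →
          (∀ j t, -deriv (deriv (u j)) t =
              μ j * u j t ^ 3 + ∑ i ∈ Finset.univ.erase j, B i j * u i t ^ 2 * u j t) →
          ∀ j t, u j t = 0 := by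
  obtain ⟨m, hm, hmμ⟩ : ∃ m, 0 < m ∧ ∀ j, m ≤ μ j :=
    ⟨(insert 1 (Finset.univ.image μ)).min' (by simp), by simp [Finset.lt_min'_iff, hμ],
      fun j => Finset.min'_le _ _ (by simp)⟩
  refine ⟨m / (4 * (N + 1)), by positivity, fun B _ hB u hu _ hsign heq j => ?_⟩
  have hκ : 0 < m - 2 * Fintype.card (Fin N) * (m / (4 * (N + 1))) := by
    rw [Fintype.card_fin]
    have : 2 * (N : ℝ) * (m / (4 * (N + 1))) ≤ m / 2 := by
      rw [mul_div_assoc', div_le_div_iff₀ (by positivity) two_pos]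
      nlinarith
    linarith
  choose σ hσ hσu using fun j => (hsign j).elim
    (fun h => ⟨1, one_pow 2, Eventually.of_forall fun t => by simp [h t]⟩)
    ChangesSignAtMost1D.exists_sign_eventually_nonneg
  have hv : ∀ j, ContDiff ℝ 2 fun t => σ j * u j t := fun j => contDiff_const.mul (hu j)
  have hveq : ∀ j t, -deriv (deriv fun t => σ j * u j t) t =
      coupledCubic μ B (fun i => σ i * u i t) j := fun j t => by
    have h : -deriv (deriv (u j)) t = coupledCubic μ B (fun i => u i t) j := heq j t
    rw [coupledCubic_mul_sign hσ, deriv_const_mul_field', deriv_const_mul_field', ← h]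
    ring
  have hvzero := eventually_eq_zero_of_eventually_nonneg hmμ (by positivity) hκ
    (fun i j hij => (hB i j hij).1) hv hveq (eventually_all.mpr hσu) j
  have hlin : ∀ t, -deriv (deriv (u j)) t =
      (μ j * u j t ^ 2 + ∑ i ∈ Finset.univ.erase j, B i j * u i t ^ 2) * u j t := fun t =>
    (heq j t).trans (coupledCubic_eq_mul μ B (fun i => u i t) j)
  have hcont : ∀ i, Continuous (u i) := fun i => (hu i).continuous
  refine eq_zero_of_deriv2_eq_mul_of_eventually_eq_zero (hu j)
    (g := fun t => -(μ j * u j t ^ 2 + ∑ i ∈ Finset.univ.erase j, B i j * u i t ^ 2))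
    (by fun_prop) (fun t => by rw [neg_mul, ← hlin, neg_neg]) (hvzero.mono fun t ht => ?_)
  exact (mul_eq_zero.mp ht).resolve_left fun h => by simpa [h] using hσ j

theorem liouville_1d_line (N : ℕ) (hN : 2 ≤ N) (μ : Fin N → ℝ) (hμ : ∀ j, 0 < μ j)
    (P : Fin N → ℕ) (β : ℝ) (hβ : 0 ≤ β) :
    ∃ ε₂ : ℝ, 0 < ε₂ ∧
      ∀ B : Fin N → Fin N → ℝ,
        (∀ i j, i ≠ j → B i j = B j i) →
        (∀ i j, i ≠ j → -ε₂ ≤ B i j ∧ B i j ≤ β) →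
        ∀ u : Fin N → ℝ → ℝ,
          (∀ j, ContDiff ℝ 2 (u j)) →
          (∀ j t, |u j t| ≤ 1) →
          (∀ j, (∀ t, u j t = 0) ∨ ChangesSignAtMost1D (u j) Set.univ (P j)) →
          (∀ j t, -deriv (deriv (u j)) t =
              μ j * u j t ^ 3 + ∑ i ∈ Finset.univ.erase j, B i j * u i t ^ 2 * u j t) →
          ∀ j t, u j t = 0 :=
  liouville_1d_line_general N μ hμ P β
end

section
/- Let N ≥ 2, let μ₁,…,μ_N > 0 be constants and let P₁,…,P_N ∈ ℕ. Then there exists a constant ε₃ = ε₃(μ₁,…,μ_N; P₁,…,P_N) > 0 with the following property: whenever real constants β_{ij} = β_{ji} (for i ≠ j) satisfy |β_{ij}| < ε₃, and u₁,…,u_N : [0,∞) → ℝ are functions of class C² such that for every j one has u_j(0) = 0, |u_j(t)| ≤ 1 for all t ∈ [0,∞), u_j is either identically zero or changes sign at most P_j times, and −u_j'' = μ_j u_j³ + Σ_{i≠j} β_{ij} u_i² u_j holds pointwise on [0,∞), then u_j ≡ 0 for every j = 1,…,N. -/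
open scoped BigOperators

/-!
A component with finitely many sign changes has eventually a fixed sign, so far out
`s = ∑ j, |u j|` is a nonnegative function with `s'' ≤ -c s³`: the diagonal terms `μ j u_j³`
dominate the small couplings. Such an `s` is concave, hence nondecreasing, and a positive value
`s x₀` would give `s'' ≤ -c (s x₀)³` and push `s'` below zero; so `u` vanishes near infinity.
For symmetric `B` the system is Hamiltonian, with conserved energy `∑ j, u_j'² / 2 + V u` whose
quartic potential `V` is positive definite when the couplings are small. The energy vanishes
near infinity, hence everywhere, which forces `V u = 0`, i.e. `u = 0`.
-/

open Finset Set Filter Topology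

section SignChanges

variable {u : ℝ → ℝ}

lemma exists_gt_mul_neg_of_frequently (hneg : ∃ᶠ t in atTop, u t < 0)
    (hpos : ∃ᶠ t in atTop, 0 < u t) {x : ℝ} (hx : u x ≠ 0) : ∃ y, x < y ∧ u x * u y < 0 := by
  rcases hx.lt_or_gt with hx | hx
  · obtain ⟨y, hy, hxy⟩ := (hpos.and_eventually (eventually_gt_atTop x)).exists
    exact ⟨y, hxy, mul_neg_of_neg_of_pos hx hy⟩
  · obtain ⟨y, hy, hxy⟩ := (hneg.and_eventually (eventually_gt_atTop x)).exists
    exact ⟨y, hxy, mul_neg_of_pos_of_neg hx hy⟩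

lemma exists_strictMono_mul_neg_of_frequently (hneg : ∃ᶠ t in atTop, u t < 0)
    (hpos : ∃ᶠ t in atTop, 0 < u t) (a : ℝ) :
    ∃ t : ℕ → ℝ, StrictMono t ∧ (∀ n, a ≤ t n) ∧ ∀ n, u (t n) * u (t (n + 1)) < 0 := by
  have step (x : {x // u x ≠ 0}) : ∃ y : {x // u x ≠ 0}, x.1 < y.1 ∧ u x * u y < 0 := by
    obtain ⟨y, hxy, hmul⟩ := exists_gt_mul_neg_of_frequently hneg hpos x.2
    exact ⟨⟨y, right_ne_zero_of_mul hmul.ne⟩, hxy, hmul⟩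
  choose next hnext_gt hnext_mul using step
  obtain ⟨x₀, hx₀, hax₀⟩ := (hpos.and_eventually (eventually_ge_atTop a)).exists
  let t n := (next^[n] ⟨x₀, hx₀.ne'⟩).1
  have ht : StrictMono t := strictMono_nat_of_lt_succ fun n => by
    simpa only [t, Function.iterate_succ_apply'] using hnext_gt _
  refine ⟨t, ht, fun n => hax₀.trans (ht.monotone n.zero_le), fun n => ?_⟩
  simpa only [t, Function.iterate_succ_apply'] using hnext_mul _

lemma ChangesSignAtMost1D.eventually_nonneg_or_eventually_nonpos {a : ℝ} {P : ℕ}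
    (h : ChangesSignAtMost1D u (Ici a) P) :
    (∀ᶠ t in atTop, 0 ≤ u t) ∨ ∀ᶠ t in atTop, u t ≤ 0 := by
  by_contra! hfreq
  obtain ⟨t, ht, hta, hmul⟩ := exists_strictMono_mul_neg_of_frequently hfreq.1 hfreq.2 a
  exact h ⟨fun i => t i, fun i => hta i, ht.comp Fin.val_strictMono, fun i => hmul i⟩

lemma exists_mul_eq_abs_of_eventually (h : (∀ᶠ t in atTop, 0 ≤ u t) ∨ ∀ᶠ t in atTop, u t ≤ 0) :
    ∃ σ : ℝ, ∀ᶠ t in atTop, σ * u t = |u t| := by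
  rcases h with h | h
  · exact ⟨1, h.mono fun t ht => by rw [one_mul, abs_of_nonneg ht]⟩
  · exact ⟨-1, h.mono fun t ht => by rw [neg_one_mul, abs_of_nonpos ht]⟩

end SignChanges

section HalfLine

variable {f f' f'' : ℝ → ℝ} {a : ℝ}

lemma le_add_mul_sub_of_hasDerivAt_le {C : ℝ} (hf : ∀ x ∈ Ici a, HasDerivAt f (f' x) x)
    (hf' : ∀ x ∈ Ici a, f' x ≤ C) {x : ℝ} (hx : x ∈ Ici a) : f x ≤ f a + C * (x - a) := by
  have hint (y) (hy : y ∈ interior (Ici a)) : HasDerivAt f (f' y) y := hf y (interior_subset hy)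
  have := (convex_Ici a).image_sub_le_mul_sub_of_deriv_le
    (fun y hy => (hf y hy).continuousAt.continuousWithinAt)
    (fun y hy => (hint y hy).differentiableAt.differentiableWithinAt)
    (fun y hy => (hint y hy).deriv ▸ hf' y (interior_subset hy)) a self_mem_Ici x hx hx
  linarith

lemma exists_neg_of_hasDerivAt_le_neg {δ : ℝ} (hδ : 0 < δ)
    (hf : ∀ x ∈ Ici a, HasDerivAt f (f' x) x) (hf' : ∀ x ∈ Ici a, f' x ≤ -δ) :
    ∃ x ∈ Ici a, f x < 0 := by
  have hx : a + (|f a| + 1) / δ ∈ Ici a := le_add_of_nonneg_right (by positivity : (0 : ℝ) ≤ _)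
  refine ⟨_, hx, (le_add_mul_sub_of_hasDerivAt_le hf hf' hx).trans_lt ?_⟩
  rw [add_sub_cancel_left, neg_mul, mul_div_cancel₀ _ hδ.ne']
  linarith [le_abs_self (f a)]

lemma eq_zero_of_hasDerivAt_le_neg_mul_pow_three {c : ℝ} (hc : 0 < c)
    (hf : ∀ x ∈ Ici a, HasDerivAt f (f' x) x) (hf' : ∀ x ∈ Ici a, HasDerivAt f' (f'' x) x)
    (hf₀ : ∀ x ∈ Ici a, 0 ≤ f x) (hf'' : ∀ x ∈ Ici a, f'' x ≤ -c * f x ^ 3) :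
    ∀ x ∈ Ici a, f x = 0 := by
  have hsub {b} (hb : b ∈ Ici a) : Ici b ⊆ Ici a := Ici_subset_Ici.2 hb
  have hderiv_nonneg : ∀ x ∈ Ici a, 0 ≤ f' x := by
    intro b hb
    by_contra! hneg
    have hf'_le : ∀ x ∈ Ici b, f' x ≤ -(-f' b) := fun x hx => by
      have := le_add_mul_sub_of_hasDerivAt_le (C := 0) (fun y hy => hf' y (hsub hb hy))
        (fun y hy => (hf'' y (hsub hb hy)).trans
          (by have := hf₀ y (hsub hb hy); nlinarith [pow_nonneg this 3])) hx
      linarith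
    obtain ⟨x, hx, hfx⟩ := exists_neg_of_hasDerivAt_le_neg (neg_pos.2 hneg)
      (fun y hy => hf y (hsub hb hy)) hf'_le
    exact (hf₀ x (hsub hb hx)).not_gt hfx
  intro x₀ hx₀
  by_contra hne
  have hpos : 0 < f x₀ := (hf₀ x₀ hx₀).lt_of_ne' hne
  have hmono : ∀ x ∈ Ici x₀, f x₀ ≤ f x := fun x hx => by
    have := le_add_mul_sub_of_hasDerivAt_le (f := fun y => -f y)
      (fun y hy => (hf y (hsub hx₀ hy)).neg) (fun y hy => neg_nonpos.2
        (hderiv_nonneg y (hsub hx₀ hy))) hx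
    linarith
  obtain ⟨x, hx, hfx⟩ := exists_neg_of_hasDerivAt_le_neg (by positivity : 0 < c * f x₀ ^ 3)
    (fun y hy => hf' y (hsub hx₀ hy)) fun y hy => by
      have := pow_le_pow_left₀ hpos.le (hmono y hy) 3
      nlinarith [hf'' y (hsub hx₀ hy)]
  exact (hderiv_nonneg x (hsub hx₀ hx)).not_gt hfx

end HalfLine

section CubicSystem

variable {ι : Type*} [Fintype ι] [DecidableEq ι]

noncomputable def cubicNonlinearity (μ : ι → ℝ) (B : ι → ι → ℝ) (w : ι → ℝ) (j : ι) : ℝ :=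
  μ j * w j ^ 3 + ∑ i ∈ univ.erase j, B i j * w i ^ 2 * w j

noncomputable def cubicPotential (μ : ι → ℝ) (B : ι → ι → ℝ) (w : ι → ℝ) : ℝ :=
  (∑ j, μ j * w j ^ 4 + ∑ j, ∑ i ∈ univ.erase j, B i j * w i ^ 2 * w j ^ 2) / 4

noncomputable def cubicEnergy (μ : ι → ℝ) (B : ι → ι → ℝ) (w z : ι → ℝ) : ℝ :=
  ∑ j, z j ^ 2 / 2 + cubicPotential μ B w

def SolvesCubicSystemOn (μ : ι → ℝ) (B : ι → ι → ℝ) (u v : ι → ℝ → ℝ) (s : Set ℝ) : Prop :=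
  ∀ j, ∀ x ∈ s, HasDerivAt (u j) (v j x) x ∧
    HasDerivAt (v j) (-cubicNonlinearity μ B (fun i => u i x) j) x

lemma sum_sum_erase_comm (f : ι → ι → ℝ) :
    ∑ j, ∑ i ∈ univ.erase j, f i j = ∑ j, ∑ i ∈ univ.erase j, f j i :=
  sum_comm' fun j i => by simp [ne_comm]

lemma abs_sum_sum_erase_le {f : ι → ι → ℝ} {C : ℝ} (hC : 0 ≤ C)
    (hf : ∀ i j, i ≠ j → |f i j| ≤ C) :
    |∑ j, ∑ i ∈ univ.erase j, f i j| ≤ Fintype.card ι ^ 2 * C := by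
  calc |∑ j, ∑ i ∈ univ.erase j, f i j| ≤ ∑ j, ∑ i ∈ univ.erase j, |f i j| :=
        (abs_sum_le_sum_abs _ _).trans (sum_le_sum fun j _ => abs_sum_le_sum_abs _ _)
    _ ≤ ∑ _j : ι, ∑ _i : ι, C := sum_le_sum fun j _ =>
        (sum_le_sum fun i hi => hf i j (ne_of_mem_erase hi)).trans
          (sum_le_sum_of_subset_of_nonneg (erase_subset _ _) fun _ _ _ => hC)
    _ = Fintype.card ι ^ 2 * C := by simp only [sum_const, card_univ, nsmul_eq_mul]; ring

variable {μ : ι → ℝ} {B : ι → ι → ℝ} {m : ℝ}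

lemma cubicNonlinearity_eq_mul (w : ι → ℝ) (j : ι) :
    cubicNonlinearity μ B w j = w j * (μ j * w j ^ 2 + ∑ i ∈ univ.erase j, B i j * w i ^ 2) := by
  simp only [cubicNonlinearity, mul_add, mul_sum]
  congr 1
  · ring
  · exact sum_congr rfl fun i _ => by ring

lemma mul_cubicNonlinearity_of_mul_eq_abs {σ : ℝ} {w : ι → ℝ} {j : ι} (h : σ * w j = |w j|) :
    σ * cubicNonlinearity μ B w j = cubicNonlinearity μ B (fun i => |w i|) j := by
  simp only [cubicNonlinearity_eq_mul, ← mul_assoc, h, sq_abs]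

section Coercive

variable [Nonempty ι] (hm : 0 ≤ m) (hμ : ∀ j, m ≤ μ j)
  (hB : ∀ i j, i ≠ j → (Fintype.card ι : ℝ) ^ 2 * |B i j| ≤ m / 2)
include hm hμ hB

lemma half_mul_norm_pow_le (w : ι → ℝ) (k : ℕ) :
    m / 2 * ‖w‖ ^ (k + 2) ≤
      ∑ j, μ j * |w j| ^ (k + 2) + ∑ j, ∑ i ∈ univ.erase j, B i j * |w i| ^ 2 * |w j| ^ k := by
  have hn : (0 : ℝ) < Fintype.card ι := by exact_mod_cast Fintype.card_pos
  have hw (i : ι) : |w i| ≤ ‖w‖ := by simpa only [Real.norm_eq_abs] using norm_le_pi_norm w i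
  obtain ⟨j₀, hj₀⟩ := (IsGreatest.pi_norm w).1
  have hdiag : m * ‖w‖ ^ (k + 2) ≤ ∑ j, μ j * |w j| ^ (k + 2) := by
    rw [← hj₀]
    exact (mul_le_mul_of_nonneg_right (hμ j₀) (by positivity)).trans <|
      single_le_sum (f := fun j => μ j * |w j| ^ (k + 2))
        (fun j _ => mul_nonneg (hm.trans (hμ j)) (by positivity)) (mem_univ j₀)
  have hoff := abs_sum_sum_erase_le (f := fun i j => B i j * |w i| ^ 2 * |w j| ^ k)
    (C := m / 2 / Fintype.card ι ^ 2 * ‖w‖ ^ (k + 2)) (by positivity) fun i j hij => by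
      rw [abs_mul, abs_mul, abs_of_nonneg (by positivity : (0 : ℝ) ≤ |w i| ^ 2),
        abs_of_nonneg (by positivity : (0 : ℝ) ≤ |w j| ^ k), pow_add, mul_comm (‖w‖ ^ k),
        ← mul_assoc]
      gcongr
      · rw [le_div_iff₀' (by positivity)]; exact hB i j hij
      · exact hw i
      · exact hw j
  rw [← mul_assoc, mul_div_cancel₀ _ (by positivity)] at hoff
  linarith [neg_abs_le (∑ j, ∑ i ∈ univ.erase j, B i j * |w i| ^ 2 * |w j| ^ k)]

lemma cubicPotential_ge (w : ι → ℝ) : m / 8 * ‖w‖ ^ 4 ≤ cubicPotential μ B w := by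
  have := half_mul_norm_pow_le hm hμ hB w 2
  simp only [sq_abs, (by decide : Even 4).pow_abs] at this
  rw [cubicPotential]
  linarith

lemma sum_cubicNonlinearity_abs_ge (w : ι → ℝ) :
    m / (2 * Fintype.card ι ^ 3) * (∑ j, |w j|) ^ 3 ≤
      ∑ j, cubicNonlinearity μ B (fun i => |w i|) j := by
  have hn : (0 : ℝ) < Fintype.card ι := by exact_mod_cast Fintype.card_pos
  have hsum : ∑ j, |w j| ≤ Fintype.card ι * ‖w‖ := by
    simpa only [Real.norm_eq_abs, nsmul_eq_mul] using Pi.sum_norm_apply_le_norm w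
  have := half_mul_norm_pow_le hm hμ hB w 1
  simp only [pow_one] at this
  rw [← div_div, div_mul_eq_mul_div, div_le_iff₀ (by positivity)]
  calc m / 2 * (∑ j, |w j|) ^ 3 ≤ m / 2 * (Fintype.card ι * ‖w‖) ^ 3 := by gcongr
    _ = m / 2 * ‖w‖ ^ 3 * Fintype.card ι ^ 3 := by ring
    _ ≤ _ := by
      gcongr
      simpa only [cubicNonlinearity, sum_add_distrib] using this

end Coercive

variable {u v : ι → ℝ → ℝ}

lemma solvesCubicSystemOn_Ioi_of_contDiffOn {a : ℝ} (hu : ∀ j, ContDiffOn ℝ 2 (u j) (Ici a))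
    (hode : ∀ j, ∀ t ∈ Ici a, -derivWithin (derivWithin (u j) (Ici a)) (Ici a) t =
      cubicNonlinearity μ B (fun i => u i t) j) :
    SolvesCubicSystemOn μ B u (fun j => deriv (u j)) (Ioi a) := by
  intro j x hx
  have hx' : x ∈ Ici a := Ioi_subset_Ici_self hx
  have hmem : Ici a ∈ 𝓝 x := Ici_mem_nhds hx
  have hu' : ContDiffOn ℝ 1 (deriv (u j)) (Ioi a) :=
    ((hu j).mono Ioi_subset_Ici_self).deriv_of_isOpen isOpen_Ioi (by norm_num)
  have hderiv2 : derivWithin (derivWithin (u j) (Ici a)) (Ici a) x = deriv (deriv (u j)) x := by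
    rw [derivWithin_of_mem_nhds hmem]
    exact Filter.EventuallyEq.deriv_eq <| eventually_of_mem (Ioi_mem_nhds hx) fun y hy =>
      derivWithin_of_mem_nhds (Ici_mem_nhds hy)
  refine ⟨(((hu j).differentiableOn (by norm_num) x hx').differentiableAt hmem).hasDerivAt, ?_⟩
  rw [← hode j x hx', neg_neg, hderiv2]
  exact ((hu'.differentiableOn one_ne_zero x hx).differentiableAt (Ioi_mem_nhds hx)).hasDerivAt

lemma hasDerivAt_cubicPotential (hBsymm : ∀ i j, i ≠ j → B i j = B j i) {w : ι → ℝ → ℝ}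
    {w' : ι → ℝ} {x : ℝ} (hw : ∀ j, HasDerivAt (w j) (w' j) x) :
    HasDerivAt (fun t => cubicPotential μ B (fun j => w j t))
      (∑ j, cubicNonlinearity μ B (fun i => w i x) j * w' j) x := by
  have h : HasDerivAt (fun t => cubicPotential μ B (fun j => w j t))
      ((∑ j, μ j * (4 * w j x ^ 3 * w' j) + ∑ j, ∑ i ∈ univ.erase j,
        (B i j * (2 * w i x * w' i) * w j x ^ 2 + B i j * w i x ^ 2 * (2 * w j x * w' j))) / 4)
      x := by
    refine ((HasDerivAt.fun_sum fun j _ => ?_).add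
      (HasDerivAt.fun_sum fun j _ => HasDerivAt.fun_sum fun i _ => ?_)).div_const 4
    · simpa using ((hw j).fun_pow 4).const_mul (μ j)
    · simpa using (((hw i).fun_pow 2).const_mul (B i j)).fun_mul ((hw j).fun_pow 2)
  have hswap : ∑ j, ∑ i ∈ univ.erase j, B i j * (2 * w i x * w' i) * w j x ^ 2 =
      ∑ j, ∑ i ∈ univ.erase j, B i j * w i x ^ 2 * (2 * w j x * w' j) := by
    rw [sum_sum_erase_comm]
    exact sum_congr rfl fun j _ => sum_congr rfl fun i hi => by
      rw [hBsymm j i (ne_of_mem_erase hi).symm]; ring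
  have hdiag : ∑ j, μ j * (4 * w j x ^ 3 * w' j) = 4 * ∑ j, μ j * w j x ^ 3 * w' j := by
    rw [mul_sum]; exact sum_congr rfl fun j _ => by ring
  have hcross : ∑ j, ∑ i ∈ univ.erase j, B i j * w i x ^ 2 * (2 * w j x * w' j) =
      2 * ∑ j, ∑ i ∈ univ.erase j, B i j * w i x ^ 2 * w j x * w' j := by
    simp only [mul_sum]; exact sum_congr rfl fun j _ => sum_congr rfl fun i _ => by ring
  refine h.congr_deriv ?_
  simp only [sum_add_distrib, hswap, hdiag, hcross, cubicNonlinearity, add_mul, sum_mul]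
  ring

namespace SolvesCubicSystemOn

variable {s : Set ℝ}

lemma hasDerivAt_cubicEnergy (hBsymm : ∀ i j, i ≠ j → B i j = B j i)
    (h : SolvesCubicSystemOn μ B u v s) {x : ℝ} (hx : x ∈ s) :
    HasDerivAt (fun t => cubicEnergy μ B (fun j => u j t) (fun j => v j t)) 0 x := by
  have hkin := HasDerivAt.fun_sum (u := Finset.univ) fun j _ => ((h j x hx).2.fun_pow 2).div_const 2
  refine (hkin.add (hasDerivAt_cubicPotential hBsymm fun j => (h j x hx).1)).congr_deriv ?_
  rw [← sum_add_distrib]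
  exact sum_eq_zero fun j _ => by ring

lemma cubicEnergy_eq (hBsymm : ∀ i j, i ≠ j → B i j = B j i)
    (h : SolvesCubicSystemOn μ B u v s) (hs : IsOpen s) (hs' : IsPreconnected s) {x y : ℝ}
    (hx : x ∈ s) (hy : y ∈ s) :
    cubicEnergy μ B (fun j => u j x) (fun j => v j x) =
      cubicEnergy μ B (fun j => u j y) (fun j => v j y) :=
  hs.is_const_of_deriv_eq_zero hs'
    (fun _ ht => (h.hasDerivAt_cubicEnergy hBsymm ht).differentiableAt.differentiableWithinAt)
    (fun _ ht => (h.hasDerivAt_cubicEnergy hBsymm ht).deriv) hx hy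

variable [Nonempty ι] {m a : ℝ} (hm : 0 < m) (hμ : ∀ j, m ≤ μ j)
  (hB : ∀ i j, i ≠ j → (Fintype.card ι : ℝ) ^ 2 * |B i j| ≤ m / 2)
include hm hμ hB

lemma eventually_eq_zero (h : SolvesCubicSystemOn μ B u v (Ioi a))
    (hsign : ∀ j, ∃ σ : ℝ, ∀ᶠ t in atTop, σ * u j t = |u j t|) :
    ∀ᶠ t in atTop, ∀ j, u j t = 0 := by
  choose σ hσ using hsign
  obtain ⟨T, hT⟩ := eventually_atTop.1 ((eventually_all.2 hσ).and (eventually_gt_atTop a))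
  have hsum (x) (hx : x ∈ Ici T) : ∑ j, σ j * u j x = ∑ j, |u j x| :=
    sum_congr rfl fun j _ => (hT x hx).1 j
  have hzero := eq_zero_of_hasDerivAt_le_neg_mul_pow_three
    (f := fun t => ∑ j, σ j * u j t) (c := m / (2 * Fintype.card ι ^ 3))
    (by have := Fintype.card_pos (α := ι); positivity)
    (fun x hx => HasDerivAt.fun_sum fun j _ => (h j x (hT x hx).2).1.const_mul (σ j))
    (fun x hx => HasDerivAt.fun_sum fun j _ => (h j x (hT x hx).2).2.const_mul (σ j))
    (fun x hx => hsum x hx ▸ by positivity) fun x hx => by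
      have hflip : ∑ j, σ j * -cubicNonlinearity μ B (fun i => u i x) j =
          -∑ j, cubicNonlinearity μ B (fun i => |u i x|) j := by
        rw [← sum_neg_distrib]
        exact sum_congr rfl fun j _ => by
          rw [mul_neg, mul_cubicNonlinearity_of_mul_eq_abs (w := fun i => u i x) ((hT x hx).1 j)]
      rw [hflip, hsum x hx]
      linarith [sum_cubicNonlinearity_abs_ge hm.le hμ hB fun i => u i x]
  filter_upwards [eventually_ge_atTop T] with x hx j
  have := (hsum x hx).symm.trans (hzero x hx)
  exact abs_eq_zero.1 ((sum_eq_zero_iff_of_nonneg fun _ _ => abs_nonneg _).1 this j (mem_univ j))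

lemma eq_zero_of_eventually_eq_zero (hBsymm : ∀ i j, i ≠ j → B i j = B j i)
    (h : SolvesCubicSystemOn μ B u v (Ioi a)) (hev : ∀ᶠ t in atTop, ∀ j, u j t = 0) :
    ∀ j, ∀ x ∈ Ioi a, u j x = 0 := by
  obtain ⟨T, hT⟩ := eventually_atTop.1 (hev.and (eventually_gt_atTop a))
  have hT₁ : T + 1 ∈ Ioi a := (hT _ (by linarith)).2
  have hv (j) : v j (T + 1) = 0 := by
    have hloc : u j =ᶠ[𝓝 (T + 1)] fun _ => 0 :=
      eventually_of_mem (Ioi_mem_nhds (lt_add_one T)) fun t ht => (hT t ht.le).1 j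
    exact (h j _ hT₁).1.unique ((hasDerivAt_const _ _).congr_of_eventuallyEq hloc)
  have hE : cubicEnergy μ B (fun j => u j (T + 1)) (fun j => v j (T + 1)) = 0 := by
    simp [cubicEnergy, cubicPotential, hv, (hT (T + 1) (by linarith)).1]
  intro j x hx
  have hEx := (h.cubicEnergy_eq hBsymm isOpen_Ioi isPreconnected_Ioi hx hT₁).trans hE
  have hkin : 0 ≤ ∑ j, v j x ^ 2 / 2 := by positivity
  have hnorm : ‖fun i => u i x‖ ^ 4 ≤ 0 := by
    have := cubicPotential_ge hm.le hμ hB fun i => u i x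
    rw [cubicEnergy] at hEx
    nlinarith
  have := pow_eq_zero_iff (n := 4) (by norm_num) |>.1 (le_antisymm hnorm (by positivity))
  simpa [this] using norm_le_pi_norm (fun i => u i x) j

end SolvesCubicSystemOn

end CubicSystem

theorem liouville_1d_halfline_small (N : ℕ) (hN : 2 ≤ N) (μ : Fin N → ℝ) (hμ : ∀ j, 0 < μ j)
    (P : Fin N → ℕ) :
    ∃ ε₃ : ℝ, 0 < ε₃ ∧
      ∀ B : Fin N → Fin N → ℝ,
        (∀ i j, i ≠ j → B i j = B j i) →
        (∀ i j, i ≠ j → |B i j| < ε₃) →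
        ∀ u : Fin N → ℝ → ℝ,
          (∀ j, ContDiffOn ℝ 2 (u j) (Set.Ici 0)) →
          (∀ j, u j 0 = 0) →
          (∀ j, ∀ t ∈ Set.Ici (0 : ℝ), |u j t| ≤ 1) →
          (∀ j, (∀ t ∈ Set.Ici (0 : ℝ), u j t = 0) ∨
            ChangesSignAtMost1D (u j) (Set.Ici 0) (P j)) →
          (∀ j, ∀ t ∈ Set.Ici (0 : ℝ),
            -derivWithin (derivWithin (u j) (Set.Ici 0)) (Set.Ici 0) t =
              μ j * u j t ^ 3 + ∑ i ∈ Finset.univ.erase j, B i j * u i t ^ 2 * u j t) →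
          ∀ j, ∀ t ∈ Set.Ici (0 : ℝ), u j t = 0 := by
  have : Nonempty (Fin N) := ⟨⟨0, by omega⟩⟩
  have hN₀ : (0 : ℝ) < N := by exact_mod_cast (by omega : 0 < N)
  set m := univ.inf' univ_nonempty μ
  have hm : 0 < m := (lt_inf'_iff _).2 fun j _ => hμ j
  refine ⟨m / (2 * N ^ 2), by positivity, fun B hBsymm hBsmall u hu hu₀ _ hsign hode => ?_⟩
  have hB (i j : Fin N) (hij : i ≠ j) : (Fintype.card (Fin N) : ℝ) ^ 2 * |B i j| ≤ m / 2 := by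
    have := hBsmall i j hij
    rw [Fintype.card_fin]
    rw [lt_div_iff₀ (by positivity)] at this
    linarith
  have hmμ (j : Fin N) : m ≤ μ j := inf'_le μ (mem_univ j)
  have hsol := solvesCubicSystemOn_Ioi_of_contDiffOn hu hode
  have hsign' (j : Fin N) : ∃ σ : ℝ, ∀ᶠ t in atTop, σ * u j t = |u j t| :=
    exists_mul_eq_abs_of_eventually <| (hsign j).elim
      (fun h => .inl <| eventually_atTop.2 ⟨0, fun t ht => (h t ht).ge⟩)
      ChangesSignAtMost1D.eventually_nonneg_or_eventually_nonpos
  intro j t ht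
  rcases (mem_Ici.1 ht).eq_or_lt with rfl | ht₀
  · exact hu₀ j
  exact hsol.eq_zero_of_eventually_eq_zero hm hmμ hB hBsymm
    (hsol.eventually_eq_zero hm hmμ hB hsign') j t ht₀
end
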